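/- arXiv:2012.00692 — 2 statements merged into one kernel-verified Lean document; each statement's English description precedes it below -/
import Mathlib

section
/- Let ρ ∈ (0,1) and define h : ℝ → ℝ as the logarithmic quantizer: h(x) = ρ^i if x ∈ ( ((1+ρ)/2)·ρ^i, ((1+ρ)/(2ρ))·ρ^i ] for some integer i, h(0) = 0, and h(x) = −h(−x) for x < 0. Then h satisfies the sector condition (h(x) − a·x)(h(x) − b·x) ≤ 0 for all x ∈ ℝ with a = 2ρ/(1+ρ) and b = 2/(1+ρ). -/
/-- The logarithmic quantizer with density `ρ ∈ (0,1)` satisfies the sector condition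
with `a = 2ρ/(1+ρ)` and `b = 2/(1+ρ)`. -/
theorem stmt12 (ρ : ℝ) (hρ0 : 0 < ρ) (hρ1 : ρ < 1) (q : ℝ → ℝ)
    (hq0 : q 0 = 0)
    (hqodd : ∀ x : ℝ, x < 0 → q x = -q (-x))
    (hq : ∀ (i : ℤ) (x : ℝ),
      ((1 + ρ) / 2) * ρ ^ i < x → x ≤ ((1 + ρ) / (2 * ρ)) * ρ ^ i → q x = ρ ^ i) :
    ∀ x : ℝ,
      (q x - (2 * ρ / (1 + ρ)) * x) * (q x - (2 / (1 + ρ)) * x) ≤ 0 := by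
  have h1ρ : (0 : ℝ) < 1 + ρ := by linarith
  have key : ∀ x : ℝ, 0 < x →
      (q x - (2 * ρ / (1 + ρ)) * x) * (q x - (2 / (1 + ρ)) * x) ≤ 0 := by
    intro x hx
    have hc : 0 < 2 * x / (1 + ρ) := by positivity
    have hinv : (1 : ℝ) < ρ⁻¹ := (one_lt_inv_iff₀).mpr ⟨hρ0, hρ1⟩
    obtain ⟨n, hn1, hn2⟩ := exists_mem_Ioc_zpow hc hinv
    have e1 : (ρ⁻¹ : ℝ) ^ n = ρ ^ (-n) := by
      rw [zpow_neg, inv_zpow]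
    have e2 : (ρ⁻¹ : ℝ) ^ (n + 1) = ρ ^ (-n) / ρ := by
      rw [zpow_add_one₀ (by positivity : (ρ⁻¹ : ℝ) ≠ 0), zpow_neg, inv_zpow]
      field_simp
    rw [e1] at hn1
    rw [e2] at hn2
    have hpow : (0 : ℝ) < ρ ^ (-n) := zpow_pos hρ0 _
    have hlo : ((1 + ρ) / 2) * ρ ^ (-n) < x := by
      rw [lt_div_iff₀ h1ρ] at hn1; nlinarith
    have hhi : x ≤ ((1 + ρ) / (2 * ρ)) * ρ ^ (-n) := by
      rw [div_le_div_iff₀ h1ρ hρ0] at hn2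
      rw [div_mul_eq_mul_div, le_div_iff₀ (by linarith : (0:ℝ) < 2 * ρ)]
      nlinarith
    have hqx : q x = ρ ^ (-n) := hq (-n) x hlo hhi
    rw [hqx]
    apply mul_nonpos_of_nonneg_of_nonpos
    · rw [sub_nonneg, div_mul_eq_mul_div, div_le_iff₀ h1ρ]
      rw [div_mul_eq_mul_div, le_div_iff₀ (by linarith : (0:ℝ) < 2 * ρ)] at hhi
      nlinarith
    · rw [sub_nonpos, div_mul_eq_mul_div, le_div_iff₀ h1ρ]
      nlinarith
  intro x
  rcases lt_trichotomy x 0 with hx | hx | hx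
  · have h1 := key (-x) (by linarith)
    rw [hqodd x hx]
    nlinarith [h1]
  · subst hx; simp [hq0]
  · exact key x hx
end

section
/- Let α ∈ ℝ and define the set S(α) of bounded linear operators P on a complex Hilbert space H satisfying: there exists ε > 0 such that cos(α)·Re⟨u, Pu⟩ − sin(α)·Im⟨u, Pu⟩ ≥ ε·‖Pu‖² for all u ∈ H. Then S(α) is a convex cone: if P₁, P₂ ∈ S(α) and θ₁, θ₂ > 0, then θ₁P₁ + θ₂P₂ ∈ S(α). -/
local notation "⟪" x ", " y "⟫_ℂ" => @inner ℂ _ _ x y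

/-- The set of bounded operators `P` satisfying the sectorial inequality
`cos α·Re⟨u, Pu⟩ − sin α·Im⟨u, Pu⟩ ≥ ε‖Pu‖²` (for some `ε > 0`) is a convex cone. -/
theorem stmt16 {H : Type*} [NormedAddCommGroup H] [InnerProductSpace ℂ H] (α : ℝ)
    (P₁ P₂ : H →L[ℂ] H) (θ₁ θ₂ : ℝ) (hθ₁ : 0 < θ₁) (hθ₂ : 0 < θ₂)
    (h₁ : ∃ ε > (0 : ℝ), ∀ u : H,
      ε * ‖P₁ u‖ ^ 2 ≤ Real.cos α * (⟪u, P₁ u⟫_ℂ).re - Real.sin α * (⟪u, P₁ u⟫_ℂ).im)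
    (h₂ : ∃ ε > (0 : ℝ), ∀ u : H,
      ε * ‖P₂ u‖ ^ 2 ≤ Real.cos α * (⟪u, P₂ u⟫_ℂ).re - Real.sin α * (⟪u, P₂ u⟫_ℂ).im) :
    ∃ ε > (0 : ℝ), ∀ u : H,
      ε * ‖((θ₁ : ℂ) • P₁ + (θ₂ : ℂ) • P₂) u‖ ^ 2
        ≤ Real.cos α * (⟪u, ((θ₁ : ℂ) • P₁ + (θ₂ : ℂ) • P₂) u⟫_ℂ).re
          - Real.sin α * (⟪u, ((θ₁ : ℂ) • P₁ + (θ₂ : ℂ) • P₂) u⟫_ℂ).im := by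
  obtain ⟨ε₁, hε₁, H₁⟩ := h₁
  obtain ⟨ε₂, hε₂, H₂⟩ := h₂
  set δ := min (ε₁ / θ₁) (ε₂ / θ₂) with hδdef
  have hδ : 0 < δ := lt_min (div_pos hε₁ hθ₁) (div_pos hε₂ hθ₂)
  refine ⟨δ / 2, by positivity, fun u => ?_⟩
  have hval : ((θ₁ : ℂ) • P₁ + (θ₂ : ℂ) • P₂) u = (θ₁ : ℂ) • P₁ u + (θ₂ : ℂ) • P₂ u := rfl
  have hinner : ⟪u, ((θ₁ : ℂ) • P₁ + (θ₂ : ℂ) • P₂) u⟫_ℂ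
      = (θ₁ : ℂ) * ⟪u, P₁ u⟫_ℂ + (θ₂ : ℂ) * ⟪u, P₂ u⟫_ℂ := by
    rw [hval, inner_add_right, inner_smul_right, inner_smul_right]
  -- norm bound
  have hnorm : ‖((θ₁ : ℂ) • P₁ + (θ₂ : ℂ) • P₂) u‖ ^ 2
      ≤ 2 * (θ₁ ^ 2 * ‖P₁ u‖ ^ 2 + θ₂ ^ 2 * ‖P₂ u‖ ^ 2) := by
    rw [hval]
    have h := norm_add_le ((θ₁ : ℂ) • P₁ u) ((θ₂ : ℂ) • P₂ u)
    rw [norm_smul, norm_smul] at h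
    have e₁ : ‖(θ₁ : ℂ)‖ = θ₁ := by
      rw [Complex.norm_real, Real.norm_eq_abs, abs_of_pos hθ₁]
    have e₂ : ‖(θ₂ : ℂ)‖ = θ₂ := by
      rw [Complex.norm_real, Real.norm_eq_abs, abs_of_pos hθ₂]
    rw [e₁, e₂] at h
    nlinarith [norm_nonneg ((θ₁:ℂ) • P₁ u + (θ₂:ℂ) • P₂ u), norm_nonneg (P₁ u),
      norm_nonneg (P₂ u), sq_nonneg (θ₁ * ‖P₁ u‖ - θ₂ * ‖P₂ u‖)]
  have key₁ := H₁ u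
  have key₂ := H₂ u
  have hδ₁ : δ ≤ ε₁ / θ₁ := min_le_left _ _
  have hδ₂ : δ ≤ ε₂ / θ₂ := min_le_right _ _
  have hδ₁' : δ * θ₁ ≤ ε₁ := by
    rw [← le_div_iff₀ hθ₁] at *; exact hδ₁
  have hδ₂' : δ * θ₂ ≤ ε₂ := by
    rw [← le_div_iff₀ hθ₂] at *; exact hδ₂
  rw [hinner]
  simp only [Complex.add_re, Complex.add_im, Complex.mul_re, Complex.mul_im,
    Complex.ofReal_re, Complex.ofReal_im]
  ring_nf
  nlinarith [sq_nonneg (‖P₁ u‖), sq_nonneg (‖P₂ u‖), norm_nonneg (P₁ u), norm_nonneg (P₂ u),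
    mul_le_mul_of_nonneg_left key₁ hθ₁.le, mul_le_mul_of_nonneg_left key₂ hθ₂.le,
    mul_le_mul_of_nonneg_right hδ₁' (mul_nonneg hθ₁.le (sq_nonneg ‖P₁ u‖)),
    mul_le_mul_of_nonneg_right hδ₂' (mul_nonneg hθ₂.le (sq_nonneg ‖P₂ u‖))]
end
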